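/- arXiv:2403.15167 — 4 statements merged into one kernel-verified Lean document; each statement's English description precedes it below -/
import Mathlib

section
/- (Theorem T1) Let V be a finite type, f : V → V, and v0 : V with f v0 = v0 and f v ≠ v for every v ≠ v0. If every vertex of V is weakly connected to v0 (i.e., the transition digraph is connected), then every vertex reaches the target: for every v ∈ V there exists n with f^[n] v = v0. -/
/-- Theorem T1: in a simple deterministic TCC whose transition digraph is connected
(every vertex weakly connected to the target `v0`), every vertex reaches the target. -/
theorem sdTCC_connected_reaches_target {V : Type*} [Finite V] (f : V → V) (v0 : V)
    (h0 : f v0 = v0) (hnl : ∀ v, v ≠ v0 → f v ≠ v)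
    (hconn : ∀ v, Relation.EqvGen (fun a b => f a = b) v v0) :
    ∀ v, ∃ n : ℕ, f^[n] v = v0 := by
  have key : ∀ u w, Relation.EqvGen (fun a b => f a = b) u w →
      ∃ m n : ℕ, f^[m] u = f^[n] w := by
    intro u w h
    induction h with
    | rel a b hab => exact ⟨1, 0, hab⟩
    | refl a => exact ⟨0, 0, rfl⟩
    | symm a b _ ih => obtain ⟨m, n, h⟩ := ih; exact ⟨n, m, h.symm⟩
    | trans a b c _ _ ih1 ih2 =>
      obtain ⟨m, n, h1⟩ := ih1
      obtain ⟨p, q, h2⟩ := ih2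
      refine ⟨p + m, n + q, ?_⟩
      calc f^[p + m] a = f^[p] (f^[m] a) := Function.iterate_add_apply f p m a
        _ = f^[p] (f^[n] b) := by rw [h1]
        _ = f^[n] (f^[p] b) := by
              rw [← Function.iterate_add_apply, Nat.add_comm, Function.iterate_add_apply]
        _ = f^[n] (f^[q] c) := by rw [h2]
        _ = f^[n + q] c := (Function.iterate_add_apply f n q c).symm
  intro v
  obtain ⟨m, n, h⟩ := key v v0 (hconn v)
  exact ⟨m, by rw [h, Function.iterate_fixed h0]⟩
end

section
/- (Theorem T1, tree form) Let V be a finite type, f : V → V, and v0 : V with f v0 = v0 and f v ≠ v for every v ≠ v0. Suppose every vertex of V is weakly connected to v0. Define the simple graph G on V by: u and v are adjacent iff u ≠ v and (f u = v or f v = u). Then G is a tree (connected and acyclic); i.e., the sdTCC transition digraph is a rooted tree with all arcs oriented towards the root v0. -/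
/-!
Every vertex reaches the fixed point `v0` by iterating `f`, so the number of steps it takes
strictly decreases along every non-loop arc. Along any edge `u — v` of the underlying graph with
`v` not deeper than `u`, the arc must therefore point from `u` to `v`, i.e. `v = f u`. At a deepest
vertex of a cycle both of its (distinct) cycle neighbours would then equal `f` of it. Connectivity
is just the weak connectivity of the digraph.
-/

open SimpleGraph

theorem SimpleGraph.isAcyclic_of_forall_adj_le {V α : Type*} [LinearOrder α] {G : SimpleGraph V}
    (d : V → α) (h : ∀ ⦃u v w⦄, G.Adj u v → G.Adj u w → d v ≤ d u → d w ≤ d u → v = w) :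
    G.IsAcyclic := by
  classical
  intro a c hc
  obtain ⟨m, hm, hmax⟩ := c.support.toFinset.exists_max_image d ⟨a, by simp⟩
  rw [List.mem_toFinset] at hm
  have hcm := hc.rotate hm
  have hmax' : ∀ x ∈ (c.rotate m hm).support, d x ≤ d m := fun x hx =>
    hmax x (List.mem_toFinset.mpr ((c.mem_support_rotate_iff m hm).mp hx))
  exact hcm.snd_ne_penultimate <| h (Walk.adj_snd hcm.not_nil)
    (Walk.adj_penultimate hcm.not_nil).symm (hmax' _ (Walk.getVert_mem_support _ _))
    (hmax' _ (Walk.getVert_mem_support _ _))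

section FunctionalGraph

variable {V : Type*} {f : V → V}

def functionalGraph (f : V → V) : SimpleGraph V :=
  SimpleGraph.fromRel fun a b => f a = b

theorem functionalGraph_reachable_apply (v : V) : (functionalGraph f).Reachable v (f v) := by
  by_cases hv : f v = v
  · rw [hv]
  · exact Adj.reachable ⟨Ne.symm hv, Or.inl rfl⟩

theorem Relation.EqvGen.functionalGraph_reachable {u v : V}
    (h : Relation.EqvGen (fun a b => f a = b) u v) : (functionalGraph f).Reachable u v := by
  refine (reachable_is_equivalence _).eqvGen_iff.mp (Relation.EqvGen.mono ?_ u v h)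
  rintro a _ rfl
  exact functionalGraph_reachable_apply a

theorem functionalGraph_connected {r : V}
    (h : ∀ v, Relation.EqvGen (fun a b => f a = b) v r) : (functionalGraph f).Connected :=
  (connected_iff_exists_forall_reachable _).mpr ⟨r, fun v => (h v).functionalGraph_reachable.symm⟩

theorem functionalGraph_eq_apply_of_adj_of_le {α : Type*} [LinearOrder α] {d : V → α}
    (hd : ∀ v, f v ≠ v → d (f v) < d v)
    {u v : V} (hadj : (functionalGraph f).Adj u v) (hle : d v ≤ d u) : v = f u := by
  obtain ⟨hne, rfl | rfl⟩ := hadj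
  · rfl
  · exact absurd (hd v hne) hle.not_gt

theorem functionalGraph_isAcyclic {α : Type*} [LinearOrder α] (d : V → α)
    (hd : ∀ v, f v ≠ v → d (f v) < d v) :
    (functionalGraph f).IsAcyclic :=
  isAcyclic_of_forall_adj_le d fun _ _ _ huv huw hv hw =>
    (functionalGraph_eq_apply_of_adj_of_le hd huv hv).trans
      (functionalGraph_eq_apply_of_adj_of_le hd huw hw).symm

theorem exists_iterate_apply_eq_iff {r : V} (hr : f r = r) (v : V) :
    (∃ n, f^[n] (f v) = r) ↔ ∃ n, f^[n] v = r := by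
  constructor
  · rintro ⟨n, hn⟩
    exact ⟨n + 1, by rwa [Function.iterate_succ_apply]⟩
  · rintro ⟨_ | n, hn⟩
    · subst hn
      exact ⟨0, hr⟩
    · exact ⟨n, hn⟩

theorem exists_iterate_eq_of_eqvGen {r v : V} (hr : f r = r)
    (h : Relation.EqvGen (fun a b => f a = b) v r) : ∃ n, f^[n] v = r := by
  suffices ∀ a b, Relation.EqvGen (fun a b => f a = b) a b →
      ((∃ n, f^[n] a = r) ↔ ∃ n, f^[n] b = r) from (this v r h).mpr ⟨0, rfl⟩
  intro a b hab
  induction hab with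
  | rel a _ hab => exact hab ▸ (exists_iterate_apply_eq_iff hr a).symm
  | refl => rfl
  | symm _ _ _ ih => exact ih.symm
  | trans _ _ _ _ _ ih₁ ih₂ => exact ih₁.trans ih₂

theorem exists_rank_of_iterate_eq {r : V} (hr : f r = r) (hreach : ∀ v, ∃ n, f^[n] v = r) :
    ∃ d : V → ℕ, ∀ v, f v ≠ v → d (f v) < d v := by
  classical
  refine ⟨fun v => Nat.find (hreach v), fun v hv => ?_⟩
  obtain ⟨k, hk⟩ : ∃ k, Nat.find (hreach v) = k + 1 := by
    refine Nat.exists_eq_succ_of_ne_zero fun h0 => hv ?_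
    have hv0 : v = r := by simpa [h0] using Nat.find_spec (hreach v)
    rw [hv0, hr]
  have hfv : f^[k] (f v) = r := by
    rw [← Function.iterate_succ_apply, Nat.succ_eq_add_one, ← hk]
    exact Nat.find_spec (hreach v)
  simp only [hk]
  exact Nat.lt_succ_of_le (Nat.find_le hfv)

end FunctionalGraph

theorem sdTCC_connected_isTree_general {V : Type*} (f : V → V) (v0 : V)
    (h0 : f v0 = v0)
    (hconn : ∀ v, Relation.EqvGen (fun a b => f a = b) v v0) :
    (SimpleGraph.mk (fun u v => u ≠ v ∧ (f u = v ∨ f v = u))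
      ⟨fun u v h => ⟨h.1.symm, h.2.symm⟩⟩
      ⟨fun u h => h.1 rfl⟩).IsTree := by
  show (functionalGraph f).IsTree
  obtain ⟨d, hd⟩ := exists_rank_of_iterate_eq h0 fun v => exists_iterate_eq_of_eqvGen h0 (hconn v)
  exact ⟨functionalGraph_connected hconn, functionalGraph_isAcyclic d hd⟩

/-- Theorem T1 (tree form): the underlying undirected graph of a connected sdTCC
transition digraph is a tree (rooted at the target `v0`, arcs oriented towards it). -/
theorem sdTCC_connected_isTree {V : Type*} [Finite V] (f : V → V) (v0 : V)
    (h0 : f v0 = v0) (hnl : ∀ v, v ≠ v0 → f v ≠ v)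
    (hconn : ∀ v, Relation.EqvGen (fun a b => f a = b) v v0) :
    (SimpleGraph.mk (fun u v => u ≠ v ∧ (f u = v ∨ f v = u))
      ⟨fun u v h => ⟨h.1.symm, h.2.symm⟩⟩
      ⟨fun u h => h.1 rfl⟩).IsTree :=
  sdTCC_connected_isTree_general f v0 h0 hconn
end

section
/- (Theorem T2, no cycles in the target component) Let V be a finite type, f : V → V, and v0 : V with f v0 = v0 and f v ≠ v for every v ≠ v0. If v ≠ v0 is weakly connected to v0, then v is not periodic: there is no m ≥ 1 with f^[m] v = v. In other words, the component of the target vertex contains no oriented cycle other than the fixed point v0 itself. -/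
/-- Theorem T2 (no cycles in the target component): a vertex `v ≠ v0` weakly
connected to the target `v0` of an sdTCC is not periodic. -/
theorem sdTCC_component_no_cycle {V : Type*} [Finite V] (f : V → V) (v0 : V)
    (h0 : f v0 = v0) (hnl : ∀ v, v ≠ v0 → f v ≠ v)
    (v : V) (hv : v ≠ v0)
    (hconn : Relation.EqvGen (fun a b => f a = b) v v0) :
    ¬ ∃ m : ℕ, 1 ≤ m ∧ f^[m] v = v := by
  rintro ⟨m, hm, hper⟩
  have key : ∀ x y, Relation.EqvGen (fun a b => f a = b) x y →
      ((∃ n, f^[n] x = v0) ↔ (∃ n, f^[n] y = v0)) := by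
    intro x y h
    induction h with
    | rel a b hab =>
      constructor
      · rintro ⟨n, hn⟩
        refine ⟨n, ?_⟩
        rw [← hab, ← Function.iterate_succ_apply, Function.iterate_succ_apply', hn, h0]
      · rintro ⟨n, hn⟩
        exact ⟨n + 1, by rw [Function.iterate_succ_apply, hab, hn]⟩
    | refl a => exact Iff.rfl
    | symm a b _ ih => exact ih.symm
    | trans a b c _ _ ih1 ih2 => exact ih1.trans ih2
  obtain ⟨n, hn⟩ := (key v v0 hconn).mpr ⟨0, rfl⟩
  have hmn : f^[m * n] v = v := by
    rw [Function.iterate_mul]; exact Function.iterate_fixed hper n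
  have hle : n ≤ m * n := Nat.le_mul_of_pos_left n hm
  have hvv0 : v = v0 := by
    calc v = f^[m * n] v := hmn.symm
    _ = f^[m * n - n] (f^[n] v) := by
        rw [← Function.iterate_add_apply, Nat.sub_add_cancel hle]
    _ = f^[m * n - n] v0 := by rw [hn]
    _ = v0 := Function.iterate_fixed h0 _
  exact hv hvv0
end

section
/- (Theorem 1, uniqueness of the cycle in each component) Let V be a finite type and f : V → V (loops allowed). If u and v are both periodic (there exist m ≥ 1 with f^[m] u = u and m' ≥ 1 with f^[m'] v = v) and u is weakly connected to v, then u and v lie on the same oriented cycle: there exists k with f^[k] u = v. Hence every connected component of the transition digraph contains exactly one oriented cycle (possibly a loop). -/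
/-- Theorem 1 (uniqueness of the cycle in each component): two periodic vertices in
the same weakly connected component of the transition digraph of `f` lie on the same
oriented cycle. -/
theorem tcc_unique_cycle_per_component {V : Type*} [Finite V] (f : V → V) (u v : V)
    (hu : ∃ m : ℕ, 1 ≤ m ∧ f^[m] u = u) (hv : ∃ m' : ℕ, 1 ≤ m' ∧ f^[m'] v = v)
    (hconn : Relation.EqvGen (fun a b => f a = b) u v) :
    ∃ k : ℕ, f^[k] u = v := by
  obtain ⟨p, hp1, hpv⟩ := hv
  have key : ∃ m n : ℕ, f^[m] u = f^[n] v := by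
    clear hu hp1 hpv
    induction hconn with
    | rel a b h => exact ⟨1, 0, by simpa using h⟩
    | refl a => exact ⟨0, 0, rfl⟩
    | symm a b h ih => obtain ⟨m, n, e⟩ := ih; exact ⟨n, m, e.symm⟩
    | trans a b c h1 h2 ih1 ih2 =>
        obtain ⟨m, n, e1⟩ := ih1
        obtain ⟨m', n', e2⟩ := ih2
        refine ⟨m' + m, n + n', ?_⟩
        calc f^[m' + m] a = f^[m'] (f^[n] b) := by rw [Function.iterate_add_apply, e1]
          _ = f^[n] (f^[m'] b) := by rw [← Function.iterate_add_apply, Nat.add_comm,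
                Function.iterate_add_apply]
          _ = f^[n + n'] c := by rw [e2, ← Function.iterate_add_apply]
  obtain ⟨m, n, e⟩ := key
  refine ⟨(p * n - n) + m, ?_⟩
  have hnp : n ≤ p * n := Nat.le_mul_of_pos_left n (by omega)
  have hfix : f^[p * n] v = v := by
    rw [Function.iterate_mul]
    exact Function.iterate_fixed hpv n
  calc f^[(p * n - n) + m] u = f^[p * n - n] (f^[m] u) := Function.iterate_add_apply ..
    _ = f^[(p * n - n) + n] v := by rw [e, ← Function.iterate_add_apply]
    _ = v := by rw [Nat.sub_add_cancel hnp]; exact hfix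
end
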